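/- Fix β > 0 and ω > 0, and define ρ_∞(β,x,ω) = βω (2πβ)^{-3/2} Σ_{k=0}^∞ g_{1/2}( x e^{-(k+1/2)ωβ} ) for real 0 < x < e^{βω/2}. Then x ↦ ρ_∞(β,x,ω) is continuous and strictly increasing on (0, e^{βω/2}), tends to 0 as x → 0⁺ and to +∞ as x → e^{βω/2}⁻; consequently, for every ρ > 0 there exists a unique x_∞(β,ρ,ω) ∈ (0, e^{βω/2}) such that ρ_∞(β, x_∞(β,ρ,ω), ω) = ρ. -/

import Mathlib

/-!
Write `ρ_∞ = C · F` with `F x = ∑ₖ g_{1/2}(x e^{-c/2} e^{-ck})` and `c = βω`. For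
`|x| ≤ b < e^{c/2}` the `k`-th term is bounded by `b e^{-c/2} / (1 - b e^{-c/2}) · e^{-ck}`,
so `F` is a locally uniform limit of continuous functions. Every term is strictly increasing
on `[0, e^{c/2})` and vanishes at `0`. Finally `F x ≥ g_{1/2}(x e^{-c/2})`, and `g_{1/2}(ζ)`
exceeds any partial sum of the divergent series `∑ n^{-1/2}` once `ζ` is close to `1`.
The intermediate value theorem and strict monotonicity then give `x_∞` and its uniqueness.
-/

open Real Filter Set Topology

noncomputable def boseTerm (σ ζ : ℝ) (n : ℕ) : ℝ := ζ ^ (n + 1) / ((n : ℝ) + 1) ^ σ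

noncomputable def bose (σ ζ : ℝ) : ℝ := ∑' n, boseTerm σ ζ n

noncomputable def oscillatorBoseSum (σ c x : ℝ) : ℝ :=
  ∑' k : ℕ, bose σ (x * exp (-((k : ℝ) + 1/2) * c))

section Bose

variable {σ ζ ζ' : ℝ}

lemma boseTerm_nonneg (hζ : 0 ≤ ζ) (n : ℕ) : 0 ≤ boseTerm σ ζ n := by
  unfold boseTerm; positivity

lemma boseTerm_le_boseTerm (hζ : 0 ≤ ζ) (h : ζ ≤ ζ') (n : ℕ) :
    boseTerm σ ζ n ≤ boseTerm σ ζ' n := by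
  unfold boseTerm; gcongr

lemma boseTerm_zero (σ : ℝ) : boseTerm σ 0 = 0 := by
  ext n; simp [boseTerm]

lemma boseTerm_apply_zero (σ ζ : ℝ) : boseTerm σ ζ 0 = ζ := by
  simp [boseTerm]

lemma abs_boseTerm_le (hσ : 0 ≤ σ) (ζ : ℝ) (n : ℕ) : |boseTerm σ ζ n| ≤ |ζ| ^ (n + 1) := by
  have h1 : 1 ≤ ((n : ℝ) + 1) ^ σ := one_le_rpow (by linarith [n.cast_nonneg (α := ℝ)]) hσ
  rw [boseTerm, abs_div, abs_pow, abs_of_pos (zero_lt_one.trans_le h1)]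
  exact div_le_self (by positivity) h1

lemma summable_boseTerm (hσ : 0 ≤ σ) (hζ : |ζ| < 1) : Summable (boseTerm σ ζ) := by
  have hg : Summable fun n => |ζ| ^ (n + 1) := by
    simpa only [pow_succ'] using (summable_geometric_of_lt_one (abs_nonneg ζ) hζ).mul_left |ζ|
  exact hg.of_norm_bounded (abs_boseTerm_le hσ ζ)

lemma abs_bose_le {a : ℝ} (hσ : 0 ≤ σ) (ha : a < 1) (hζ : |ζ| ≤ a) :
    |bose σ ζ| ≤ |ζ| / (1 - a) := by
  have ha0 : 0 ≤ a := (abs_nonneg ζ).trans hζ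
  rw [← Real.norm_eq_abs (bose σ ζ), bose]
  refine tsum_of_norm_bounded ((hasSum_geometric_of_lt_one ha0 ha).mul_left |ζ|) fun n => ?_
  calc ‖boseTerm σ ζ n‖ ≤ |ζ| ^ (n + 1) := abs_boseTerm_le hσ ζ n
    _ = |ζ| * |ζ| ^ n := pow_succ' _ _
    _ ≤ |ζ| * a ^ n := by gcongr

lemma continuousOn_Ioo_of_forall_Icc {f : ℝ → ℝ} {R : ℝ}
    (h : ∀ b ∈ Ico 0 R, ContinuousOn f (Icc (-b) b)) : ContinuousOn f (Ioo (-R) R) := by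
  intro x hx
  have hxR : |x| < R := abs_lt.mpr hx
  have hb : (|x| + R) / 2 ∈ Ico 0 R := ⟨by linarith [abs_nonneg x], by linarith⟩
  refine ((h _ hb).continuousAt (Icc_mem_nhds ?_ ?_)).continuousWithinAt
  · linarith [neg_abs_le x]
  · linarith [le_abs_self x]

lemma continuousOn_bose (hσ : 0 ≤ σ) : ContinuousOn (bose σ) (Ioo (-1) 1) := by
  refine continuousOn_Ioo_of_forall_Icc fun a ⟨ha0, ha⟩ => ?_
  refine continuousOn_tsum (u := fun n => a ^ (n + 1)) (fun n => ?_) ?_ fun n ζ hζ => ?_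
  · exact ((continuous_pow _).div_const _).continuousOn
  · simpa only [pow_succ'] using (summable_geometric_of_lt_one ha0 ha).mul_left a
  · exact (abs_boseTerm_le hσ ζ n).trans (by gcongr; exact abs_le.mpr hζ)

lemma bose_zero (σ : ℝ) : bose σ 0 = 0 := by
  simp [bose, boseTerm_zero]

lemma bose_nonneg (hζ : 0 ≤ ζ) : 0 ≤ bose σ ζ :=
  tsum_nonneg (boseTerm_nonneg hζ)

lemma strictMonoOn_bose (hσ : 0 ≤ σ) : StrictMonoOn (bose σ) (Ico 0 1) := by
  intro ζ hζ ζ' hζ' h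
  refine Summable.tsum_lt_tsum_of_nonneg (i := 0) (boseTerm_nonneg hζ.1)
    (boseTerm_le_boseTerm hζ.1 h.le) ?_ (summable_boseTerm hσ ?_)
  · simpa only [boseTerm_apply_zero] using h
  · rw [abs_of_nonneg hζ'.1]; exact hζ'.2

lemma not_summable_boseTerm_one (hσ : σ ≤ 1) : ¬ Summable (boseTerm σ 1) := by
  have h : boseTerm σ 1 = fun n => (fun m : ℕ => 1 / (m : ℝ) ^ σ) (n + 1) := by
    ext n; simp [boseTerm]
  rw [h, summable_nat_add_iff (f := fun m : ℕ => 1 / (m : ℝ) ^ σ) 1,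
    Real.summable_one_div_nat_rpow, not_lt]
  exact hσ

lemma tendsto_bose_nhdsLT_one (hσ0 : 0 ≤ σ) (hσ1 : σ ≤ 1) :
    Tendsto (bose σ) (𝓝[<] 1) atTop := by
  rw [tendsto_atTop]
  intro M
  obtain ⟨N, hN⟩ : ∃ N, M + 1 ≤ ∑ n ∈ Finset.range N, boseTerm σ 1 n :=
    ((not_summable_iff_tendsto_nat_atTop_of_nonneg (boseTerm_nonneg zero_le_one)).mp
      (not_summable_boseTerm_one hσ1) |>.eventually_ge_atTop (M + 1)).exists
  have hcont : Continuous fun ζ => ∑ n ∈ Finset.range N, boseTerm σ ζ n :=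
    continuous_finsetSum _ fun n _ => (continuous_pow _).div_const _
  have hnear : ∀ᶠ ζ in 𝓝[<] 1, M ≤ ∑ n ∈ Finset.range N, boseTerm σ ζ n :=
    nhdsWithin_le_nhds <| hcont.continuousAt.eventually (eventually_ge_nhds (by linarith))
  filter_upwards [hnear, Ico_mem_nhdsLT zero_lt_one] with ζ hM hζ
  refine hM.trans (Summable.sum_le_tsum _ (fun n _ => boseTerm_nonneg hζ.1 n) ?_)
  exact summable_boseTerm hσ0 (by rw [abs_of_nonneg hζ.1]; exact hζ.2)

end Bose

section Oscillator

variable {σ c x b : ℝ}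

lemma exp_neg_add_half_mul (c : ℝ) (k : ℕ) :
    exp (-((k : ℝ) + 1/2) * c) = exp (-c) ^ k / exp (c / 2) := by
  rw [← exp_nat_mul, ← exp_sub]; ring_nf

lemma abs_mul_exp_neg_add_half_mul_le (hx : |x| ≤ b) (k : ℕ) :
    |x * exp (-((k : ℝ) + 1/2) * c)| ≤ b / exp (c / 2) * exp (-c) ^ k := by
  rw [abs_mul, abs_of_pos (exp_pos _), exp_neg_add_half_mul]
  calc |x| * (exp (-c) ^ k / exp (c / 2)) = |x| / exp (c / 2) * exp (-c) ^ k := by ring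
    _ ≤ b / exp (c / 2) * exp (-c) ^ k := by gcongr

lemma abs_bose_mul_exp_neg_add_half_mul_le (hσ : 0 ≤ σ) (hc : 0 ≤ c) (hb : b < exp (c / 2))
    (hx : |x| ≤ b) (k : ℕ) :
    |bose σ (x * exp (-((k : ℝ) + 1/2) * c))| ≤
      b / exp (c / 2) / (1 - b / exp (c / 2)) * exp (-c) ^ k := by
  set a := b / exp (c / 2)
  have ha : a < 1 := (div_lt_one (exp_pos _)).mpr hb
  have hq : exp (-c) ^ k ≤ 1 := pow_le_one₀ (exp_nonneg _) (exp_le_one_iff.mpr (by linarith))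
  have hζ := abs_mul_exp_neg_add_half_mul_le (c := c) hx k
  have ha0 : 0 ≤ a := div_nonneg ((abs_nonneg x).trans hx) (exp_pos _).le
  calc _ ≤ |x * exp (-((k : ℝ) + 1/2) * c)| / (1 - a) :=
        abs_bose_le hσ ha (hζ.trans (mul_le_of_le_one_right ha0 hq))
    _ ≤ a * exp (-c) ^ k / (1 - a) := by gcongr
    _ = a / (1 - a) * exp (-c) ^ k := div_mul_eq_mul_div _ _ _ |>.symm

lemma summable_bose_mul_exp_neg_add_half_mul (hσ : 0 ≤ σ) (hc : 0 < c) (hx : |x| < exp (c / 2)) :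
    Summable fun k : ℕ => bose σ (x * exp (-((k : ℝ) + 1/2) * c)) := by
  refine .of_norm_bounded ?_ (abs_bose_mul_exp_neg_add_half_mul_le hσ hc.le hx le_rfl)
  exact (summable_geometric_of_lt_one (exp_nonneg _) (exp_lt_one_iff.mpr (by linarith))).mul_left _

lemma abs_mul_exp_neg_add_half_mul_lt_one (hc : 0 ≤ c) (hx : |x| < exp (c / 2)) (k : ℕ) :
    |x * exp (-((k : ℝ) + 1/2) * c)| < 1 := by
  have hq : exp (-c) ^ k ≤ 1 := pow_le_one₀ (exp_nonneg _) (exp_le_one_iff.mpr (by linarith))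
  refine (abs_mul_exp_neg_add_half_mul_le le_rfl k).trans_lt ?_
  exact (mul_le_of_le_one_right (by positivity) hq).trans_lt ((div_lt_one (exp_pos _)).mpr hx)

lemma continuousOn_oscillatorBoseSum (hσ : 0 ≤ σ) (hc : 0 < c) :
    ContinuousOn (oscillatorBoseSum σ c) (Ioo (-exp (c / 2)) (exp (c / 2))) := by
  refine continuousOn_Ioo_of_forall_Icc fun b ⟨_, hb⟩ => ?_
  refine continuousOn_tsum (fun k => ?_) ?_ fun k x hx =>
    abs_bose_mul_exp_neg_add_half_mul_le hσ hc.le hb (abs_le.mpr hx) k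
  · refine (continuousOn_bose hσ).comp (continuousOn_id.mul continuousOn_const) fun x hx => ?_
    exact abs_lt.mp (abs_mul_exp_neg_add_half_mul_lt_one hc.le ((abs_le.mpr hx).trans_lt hb) k)
  · exact (summable_geometric_of_lt_one (exp_nonneg _) (exp_lt_one_iff.mpr (by linarith))).mul_left _

lemma oscillatorBoseSum_zero (σ c : ℝ) : oscillatorBoseSum σ c 0 = 0 := by
  simp [oscillatorBoseSum, bose_zero]

lemma mul_exp_neg_add_half_mul_mem_Ico (hc : 0 ≤ c) (hx : x ∈ Ico 0 (exp (c / 2))) (k : ℕ) :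
    x * exp (-((k : ℝ) + 1/2) * c) ∈ Ico 0 1 := by
  refine ⟨mul_nonneg hx.1 (exp_pos _).le, (le_abs_self _).trans_lt ?_⟩
  exact abs_mul_exp_neg_add_half_mul_lt_one hc ((abs_of_nonneg hx.1).trans_lt hx.2) k

lemma strictMonoOn_oscillatorBoseSum (hσ : 0 ≤ σ) (hc : 0 < c) :
    StrictMonoOn (oscillatorBoseSum σ c) (Ico 0 (exp (c / 2))) := by
  intro x hx y hy hxy
  have hmono : ∀ k : ℕ, bose σ (x * exp (-((k : ℝ) + 1/2) * c)) <
      bose σ (y * exp (-((k : ℝ) + 1/2) * c)) := fun k =>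
    strictMonoOn_bose hσ (mul_exp_neg_add_half_mul_mem_Ico hc.le hx k)
      (mul_exp_neg_add_half_mul_mem_Ico hc.le hy k) (by gcongr)
  exact Summable.tsum_lt_tsum_of_nonneg (i := 0)
    (fun k => bose_nonneg (mul_exp_neg_add_half_mul_mem_Ico hc.le hx k).1) (fun k => (hmono k).le)
    (hmono 0) (summable_bose_mul_exp_neg_add_half_mul hσ hc ((abs_of_nonneg hy.1).trans_lt hy.2))

lemma tendsto_oscillatorBoseSum_atTop (hσ0 : 0 ≤ σ) (hσ1 : σ ≤ 1) (hc : 0 < c) :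
    Tendsto (oscillatorBoseSum σ c) (𝓝[<] exp (c / 2)) atTop := by
  set R := exp (c / 2)
  have hR : 0 < R := exp_pos _
  have hlim : Tendsto (fun x => x / R) (𝓝[<] R) (𝓝[<] 1) := by
    refine tendsto_nhdsWithin_iff.mpr ⟨?_, ?_⟩
    · simpa [hR.ne'] using ((continuous_id.div_const R).tendsto R).mono_left nhdsWithin_le_nhds
    · filter_upwards [self_mem_nhdsWithin] with x hx using (div_lt_one hR).mpr hx
  refine tendsto_atTop_mono' _ ?_ ((tendsto_bose_nhdsLT_one hσ0 hσ1).comp hlim)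
  filter_upwards [Ico_mem_nhdsLT hR] with x hx
  have h0 : x * exp (-(((0 : ℕ) : ℝ) + 1/2) * c) = x / R := by
    rw [exp_neg_add_half_mul, pow_zero, mul_one_div]
  have h := (summable_bose_mul_exp_neg_add_half_mul hσ0 hc (c := c)
    ((abs_of_nonneg hx.1).trans_lt hx.2)).le_tsum 0
    (fun k _ => bose_nonneg (mul_exp_neg_add_half_mul_mem_Ico hc.le hx k).1)
  rwa [h0] at h

end Oscillator

lemma StrictMonoOn.existsUnique_eq_of_tendsto {f : ℝ → ℝ} {a b l y : ℝ} (hab : a < b)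
    (hcont : ContinuousOn f (Ioo a b)) (hmono : StrictMonoOn f (Ioo a b))
    (ha : Tendsto f (𝓝[>] a) (𝓝 l)) (hb : Tendsto f (𝓝[<] b) atTop) (hy : l < y) :
    ∃! x, x ∈ Ioo a b ∧ f x = y := by
  have : (𝓝[>] a).NeBot := nhdsGT_neBot_of_exists_gt ⟨b, hab⟩
  obtain ⟨x, hx, hfx⟩ := isPreconnected_Ioo.intermediate_value_Ioi
    (le_principal_iff.mpr (Ioo_mem_nhdsGT hab)) (le_principal_iff.mpr (Ioo_mem_nhdsLT hab))
    hcont ha hb hy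
  exact ⟨x, ⟨hx, hfx⟩, fun x' hx' => hmono.injOn hx'.1 hx (hx'.2.trans hfx.symm)⟩

/-- The infinite-volume density
`ρ_∞(β,x,ω) = βω (2πβ)^{-3/2} Σ_{k≥0} g_{1/2}( x e^{-(k+1/2)ωβ} )`,
with `g_{1/2}(ζ) = Σ_{n≥1} ζⁿ/n^{1/2}`, is continuous and strictly increasing on
`(0, e^{βω/2})`, tends to `0` as `x → 0⁺` and to `+∞` as `x → e^{βω/2}⁻`;
consequently for every `ρ > 0` there is a unique `x_∞ ∈ (0, e^{βω/2})` with
`ρ_∞(β, x_∞, ω) = ρ`. -/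
theorem stmt_5 (β ω : ℝ) (hβ : 0 < β) (hω : 0 < ω) (ρinf : ℝ → ℝ)
    (hρinf : ∀ x : ℝ, ρinf x = β * ω * (2 * π * β) ^ (-(3/2) : ℝ) *
      ∑' k : ℕ, ∑' n : ℕ,
        (x * Real.exp (-(((k : ℝ) + 1/2)) * ω * β)) ^ (n + 1) /
          ((n : ℝ) + 1) ^ ((1/2 : ℝ))) :
    ContinuousOn ρinf (Set.Ioo 0 (Real.exp (β * ω / 2))) ∧
    StrictMonoOn ρinf (Set.Ioo 0 (Real.exp (β * ω / 2))) ∧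
    Tendsto ρinf (nhdsWithin 0 (Set.Ioi 0)) (nhds 0) ∧
    Tendsto ρinf
      (nhdsWithin (Real.exp (β * ω / 2)) (Set.Ioo 0 (Real.exp (β * ω / 2)))) atTop ∧
    ∀ ρ : ℝ, 0 < ρ →
      ∃! x : ℝ, x ∈ Set.Ioo 0 (Real.exp (β * ω / 2)) ∧ ρinf x = ρ := by
  set C := β * ω * (2 * π * β) ^ (-(3/2) : ℝ)
  have hC : 0 < C := by positivity
  have hc : 0 < β * ω := mul_pos hβ hω
  have hR : 0 < exp (β * ω / 2) := exp_pos _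
  obtain rfl : ρinf = fun x => C * oscillatorBoseSum (1/2) (β * ω) x := by
    ext x
    rw [hρinf]
    simp only [oscillatorBoseSum, bose, boseTerm, mul_assoc]
    rw [mul_comm ω β]
  have hcont := (continuousOn_oscillatorBoseSum (σ := 1/2) (by norm_num) hc).const_mul C
  have hcont' := hcont.mono (Ioo_subset_Ioo_left (neg_lt_zero.mpr hR).le)
  have hmono : StrictMonoOn (fun x => C * oscillatorBoseSum (1/2) (β * ω) x)
      (Ioo 0 (exp (β * ω / 2))) := fun x hx y hy hxy =>
    mul_lt_mul_of_pos_left (strictMonoOn_oscillatorBoseSum (by norm_num) hc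
      (Ioo_subset_Ico_self hx) (Ioo_subset_Ico_self hy) hxy) hC
  have hzero := (hcont.continuousAt (Ioo_mem_nhds (neg_lt_zero.mpr hR) hR)).tendsto
  rw [oscillatorBoseSum_zero, mul_zero] at hzero
  replace hzero := hzero.mono_left (nhdsWithin_le_nhds (s := Ioi 0))
  have htop := (tendsto_oscillatorBoseSum_atTop (σ := 1/2) (by norm_num) (by norm_num)
    hc).const_mul_atTop hC
  rw [nhdsWithin_Ioo_eq_nhdsLT hR]
  exact ⟨hcont', hmono, hzero, htop,
    fun ρ hρ => hmono.existsUnique_eq_of_tendsto hR hcont' hzero htop hρ⟩
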